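/- arXiv:0711.2571 — 2 statements merged into one kernel-verified Lean document; each statement's English description precedes it below -/
import Mathlib

section
/- For all integers n ≥ 2 and k ≥ 1, the graph K_1 ⊔ K_{kn−1} (the disjoint union of an isolated vertex and a complete graph on kn − 1 vertices) contains no k pairwise vertex-disjoint copies of the path P_n, and its complement contains no Jahangir graph J_4 as a subgraph. Consequently R(kP_n, J_4) ≥ kn + 1. -/
open SimpleGraph

/-- `G` is contained in `F` as a (not necessarily induced) subgraph, i.e. there is an
injective graph homomorphism from `G` into `F`. -/
def Contains {α : Type*} {β : Type*} (G : SimpleGraph α) (F : SimpleGraph β) : Prop :=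
  ∃ f : α → β, Function.Injective f ∧ ∀ ⦃a b : α⦄, G.Adj a b → F.Adj (f a) (f b)

/-- The Jahangir graph `J_{2m}` on `2m+1` vertices: a cycle on the vertices
`0, 1, …, 2m-1` together with one additional hub vertex (index `2m`) adjacent to the
alternate cycle vertices `0, 2, …, 2m-2`. -/
def jahangir (m : ℕ) : SimpleGraph (Fin (2 * m + 1)) :=
  SimpleGraph.fromRel (fun a b =>
    (a.val < 2 * m ∧ b.val < 2 * m ∧ b.val = (a.val + 1) % (2 * m)) ∨
    (a.val = 2 * m ∧ b.val < 2 * m ∧ b.val % 2 = 0))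

/-- The disjoint union of `k` copies of the graph `G`. -/
def kCopies {α : Type*} (k : ℕ) (G : SimpleGraph α) : SimpleGraph (Fin k × α) where
  Adj a b := a.1 = b.1 ∧ G.Adj a.2 b.2
  symm := ⟨fun _ _ h => ⟨h.1.symm, h.2.symm⟩⟩
  loopless := ⟨fun a h => G.loopless.irrefl a.2 h.2⟩

/-- The disjoint union `K_a ⊔ K_b` of two complete graphs. -/
def twoCliques (a b : ℕ) : SimpleGraph (Fin a ⊕ Fin b) :=
  SimpleGraph.fromRel (fun x y => x.isLeft = y.isLeft)

/-- `ramseyProp G H N` says that every simple graph `F` on `N` vertices contains `G`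
as a subgraph, or its complement contains `H` as a subgraph.  The Ramsey number
`R(G, H)` is the least `N` with this property. -/
def ramseyProp {α : Type*} {β : Type*} (G : SimpleGraph α) (H : SimpleGraph β) (N : ℕ) : Prop :=
  ∀ F : SimpleGraph (Fin N), Contains G F ∨ Contains H Fᶜ

/-!
`K_1 ⊔ K_{kn-1}` has exactly `kn` vertices, one of them isolated, while every vertex of `kP_n`
has a neighbour, so an injective homomorphism `kP_n → K_1 ⊔ K_{kn-1}`, being a bijection, would
have to send some vertex onto the isolated one. The complement of `K_1 ⊔ K_{kn-1}` is a star,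
which contains no path on four vertices, while `J_4` does. Restricting `K_1 ⊔ K_{kn-1}` to any
`N ≤ kn` of its vertices then shows that `N` is not a Ramsey number for `(kP_n, J_4)`.
-/

section Contains

variable {α β γ : Type*}

theorem Contains.trans {G : SimpleGraph α} {F : SimpleGraph β} {H : SimpleGraph γ}
    (hGF : Contains G F) (hFH : Contains F H) : Contains G H := by
  obtain ⟨f, hf, hfadj⟩ := hGF
  obtain ⟨g, hg, hgadj⟩ := hFH
  exact ⟨g ∘ f, hg.comp hf, fun _ _ h => hgadj (hfadj h)⟩

theorem contains_comap (e : α ↪ β) (F : SimpleGraph β) : Contains (F.comap e) F :=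
  ⟨e, e.injective, fun _ _ h => h⟩

theorem contains_compl_comap (e : α ↪ β) (F : SimpleGraph β) : Contains (F.comap e)ᶜ Fᶜ :=
  ⟨e, e.injective, fun _ _ h => ⟨fun he => h.1 (e.injective he), h.2⟩⟩

theorem not_contains_of_isolated [Fintype α] [Fintype β] {G : SimpleGraph α}
    {F : SimpleGraph β} (hcard : Fintype.card α = Fintype.card β)
    (hG : ∀ a, ∃ b, G.Adj a b) (v : β) (hv : ∀ w, ¬ F.Adj v w) : ¬ Contains G F := by
  rintro ⟨f, hf, hfadj⟩
  obtain ⟨a, rfl⟩ := ((Fintype.bijective_iff_injective_and_card f).mpr ⟨hf, hcard⟩).2 v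
  obtain ⟨b, hab⟩ := hG a
  exact hv _ (hfadj hab)

theorem card_lt_of_ramseyProp [Fintype γ] {G : SimpleGraph α} {H : SimpleGraph β}
    {F : SimpleGraph γ} (hG : ¬ Contains G F) (hH : ¬ Contains H Fᶜ) {N : ℕ}
    (hN : ramseyProp G H N) : Fintype.card γ < N := by
  by_contra! hle
  let e : Fin N ↪ γ := (Fin.castLEEmb hle).trans (Fintype.equivFin γ).symm.toEmbedding
  rcases hN (F.comap e) with hGF | hHF
  · exact hG (hGF.trans (contains_comap e F))
  · exact hH (hHF.trans (contains_compl_comap e F))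

end Contains

theorem kCopies_exists_adj {α : Type*} {G : SimpleGraph α} (hG : ∀ a, ∃ b, G.Adj a b) (k : ℕ)
    (x : Fin k × α) : ∃ y, (kCopies k G).Adj x y := by
  obtain ⟨b, hb⟩ := hG x.2
  exact ⟨(x.1, b), rfl, hb⟩

theorem pathGraph_exists_adj {n : ℕ} (hn : 2 ≤ n) (j : Fin n) : ∃ j', (pathGraph n).Adj j j' :=
  haveI := Fin.nontrivial_iff_two_le.mpr hn
  (pathGraph_preconnected n).exists_adj_of_nontrivial j

theorem contains_pathGraph_four_jahangir_two : Contains (pathGraph 4) (jahangir 2) := by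
  refine ⟨Fin.castSucc, Fin.castSucc_injective _, ?_⟩
  simp only [pathGraph_adj, jahangir, fromRel_adj]
  decide

section TwoCliques

variable {a b : ℕ}

theorem twoCliques_adj {x y : Fin a ⊕ Fin b} :
    (twoCliques a b).Adj x y ↔ x ≠ y ∧ x.isLeft = y.isLeft := by
  rw [twoCliques, fromRel_adj, eq_comm (a := y.isLeft), or_self]

theorem compl_twoCliques_adj {x y : Fin a ⊕ Fin b} :
    (twoCliques a b)ᶜ.Adj x y ↔ x.isLeft ≠ y.isLeft := by
  rw [compl_adj, twoCliques_adj]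
  constructor
  · exact fun h he => h.2 ⟨h.1, he⟩
  · intro h
    exact ⟨fun hxy => h (congrArg Sum.isLeft hxy), fun h' => h h'.2⟩

theorem isLeft_eq_inl_zero {x : Fin 1 ⊕ Fin b} (hx : x.isLeft) : x = Sum.inl 0 := by
  obtain ⟨i, rfl⟩ := Sum.isLeft_iff.mp hx
  rw [Subsingleton.elim i 0]

theorem twoCliques_one_not_adj_inl (i : Fin 1) (y : Fin 1 ⊕ Fin b) :
    ¬ (twoCliques 1 b).Adj (Sum.inl i) y := by
  rw [twoCliques_adj]
  rintro ⟨hne, hleft⟩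
  exact hne ((isLeft_eq_inl_zero rfl).trans (isLeft_eq_inl_zero hleft.symm).symm)

theorem not_contains_pathGraph_four_compl_twoCliques_one :
    ¬ Contains (pathGraph 4) (twoCliques 1 b)ᶜ := by
  rintro ⟨f, hf, hfadj⟩
  have hstep : ∀ i j : Fin 4, i.val + 1 = j.val → (f i).isLeft ≠ (f j).isLeft := fun i j h =>
    compl_twoCliques_adj.mp (hfadj (pathGraph_adj.mpr (Or.inl h)))
  have hcentre : ∀ i j : Fin 4, (f i).isLeft → (f j).isLeft → i = j := fun i j hi hj =>
    hf ((isLeft_eq_inl_zero hi).trans (isLeft_eq_inl_zero hj).symm)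
  have alternate : ∀ b₀ b₁ b₂ b₃ : Bool, b₀ ≠ b₁ → b₁ ≠ b₂ → b₂ ≠ b₃ → b₀ ∧ b₂ ∨ b₁ ∧ b₃ := by
    simp [Bool.forall_bool]
  rcases alternate _ _ _ _ (hstep 0 1 rfl) (hstep 1 2 rfl) (hstep 2 3 rfl) with ⟨h0, h2⟩ | ⟨h1, h3⟩
  · exact absurd (hcentre 0 2 h0 h2) (by decide)
  · exact absurd (hcentre 1 3 h1 h3) (by decide)

end TwoCliques

/-- For `n ≥ 2` and `k ≥ 1`, the graph `K_1 ⊔ K_{kn-1}` contains no `k` disjoint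
copies of `P_n`, its complement contains no `J_4`, and consequently
`R(kP_n, J_4) ≥ kn + 1`. -/
theorem ramsey_kPath_J4_lower (n k : ℕ) (hn : 2 ≤ n) (hk : 1 ≤ k) :
    ¬ Contains (kCopies k (pathGraph n)) (twoCliques 1 (k * n - 1)) ∧
    ¬ Contains (jahangir 2) (twoCliques 1 (k * n - 1))ᶜ ∧
    ∀ N : ℕ, ramseyProp (kCopies k (pathGraph n)) (jahangir 2) N → k * n + 1 ≤ N := by
  have hkn : k * n = 1 + (k * n - 1) := by
    have : 1 ≤ k * n := Nat.mul_pos hk (by omega)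
    omega
  have hkPath : ¬ Contains (kCopies k (pathGraph n)) (twoCliques 1 (k * n - 1)) :=
    not_contains_of_isolated (by simp [← hkn]) (kCopies_exists_adj (pathGraph_exists_adj hn) k)
      (Sum.inl 0) (twoCliques_one_not_adj_inl 0)
  have hJ4 : ¬ Contains (jahangir 2) (twoCliques 1 (k * n - 1))ᶜ := fun h =>
    not_contains_pathGraph_four_compl_twoCliques_one (contains_pathGraph_four_jahangir_two.trans h)
  refine ⟨hkPath, hJ4, fun N hN => ?_⟩
  have := card_lt_of_ramseyProp hkPath hJ4 hN
  simp only [Fintype.card_sum, Fintype.card_fin] at this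
  omega
end

section
/- For all integers n ≥ 5 and k ≥ 1, every simple graph F on kn + 1 vertices either contains k pairwise vertex-disjoint copies of the path P_n as subgraphs, or its complement contains the Jahangir graph J_4 as a subgraph. -/
open SimpleGraph

/-!
Since `J_4 = K_{2,3}`, the hypothesis says that any two vertices of `F` have at most two common
non-neighbours. Take a longest path `p₀ p₁ p₂ … q` in a graph on at least `n + 1 ≥ 6` vertices.
No vertex off the path is adjacent to `p₀` or `q`, so at most two vertices lie off the path, and
the path has at least four vertices. Two vertices `a ≠ b` off the path are impossible: the
`K_{2,3}` condition for the pairs `{a, b}` and `{a, p₀}` forces adjacencies between `a, b` and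
`p₁, p₂` that always allow inserting `a` or `b` after `p₁`, or rotating the path at `p₀`, into a
longer path. So `F` has a path on `n` vertices; delete it and induct on `k`.
-/

theorem contains_iff_isContained {α β : Type*} {G : SimpleGraph α} {F : SimpleGraph β} :
    Contains G F ↔ G ⊑ F :=
  ⟨fun ⟨f, hf, hadj⟩ => ⟨⟨⟨f, fun h => hadj h⟩, hf⟩⟩,
    fun ⟨c⟩ => ⟨c, c.injective, fun _ _ h => c.toHom.map_adj h⟩⟩

namespace SimpleGraph

variable {V : Type*} {G : SimpleGraph V}

theorem jahangir_two_isContained_compl {x y a b c : V} (hd : [x, y, a, b, c].Nodup)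
    (hxa : ¬G.Adj x a) (hya : ¬G.Adj y a) (hxb : ¬G.Adj x b) (hyb : ¬G.Adj y b)
    (hxc : ¬G.Adj x c) (hyc : ¬G.Adj y c) : jahangir 2 ⊑ Gᶜ := by
  simp only [List.nodup_cons, List.mem_cons, List.not_mem_nil, or_false, not_or] at hd
  -- `jahangir 2` is `K_{2,3}` with parts `{0, 2}` and `{1, 3, 4}`
  refine ⟨⟨⟨![x, a, y, b, c], fun {i j} h => ?_⟩, fun i j h => ?_⟩⟩
  · rw [compl_adj]
    fin_cases i <;> fin_cases j <;> simp [jahangir] at h ⊢ <;> grind [G.adj_symm]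
  · fin_cases i <;> fin_cases j <;> simp at h ⊢ <;> grind

theorem pathGraph_isContained_pathGraph {m n : ℕ} (h : m ≤ n) : pathGraph m ⊑ pathGraph n :=
  ⟨⟨⟨Fin.castLE h, fun hab => by simpa [pathGraph_adj] using hab⟩,
    Fin.castLE_injective h⟩⟩

theorem kCopies_succ_isContained {α β : Type*} {H : SimpleGraph α} {G : SimpleGraph β} {k : ℕ}
    (f : Copy H G) (h : kCopies k H ⊑ G.induce (Set.range f)ᶜ) : kCopies (k + 1) H ⊑ G := by
  obtain ⟨g⟩ := h
  let e : Fin (k + 1) × α → β := fun x =>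
    Fin.lastCases (f x.2) (fun i => (g (i, x.2) : β)) x.1
  have hg : ∀ i a, (g (i, a) : β) ∉ Set.range f := fun i a => (g (i, a)).2
  refine ⟨⟨⟨e, ?_⟩, ?_⟩⟩
  · rintro ⟨i, a⟩ ⟨j, b⟩ ⟨rfl, hab⟩
    cases i using Fin.lastCases with
    | last => simpa [e] using f.toHom.map_adj hab
    | cast i =>
      simpa [e] using g.toHom.map_adj (show (kCopies k H).Adj (i, a) (i, b) from ⟨rfl, hab⟩)
  · rintro ⟨i, a⟩ ⟨j, b⟩ (hij : e _ = e _)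
    cases i using Fin.lastCases <;> cases j using Fin.lastCases <;>
      simp only [e, Fin.lastCases_last, Fin.lastCases_castSucc] at hij
    · rw [f.injective hij]
    · exact absurd ⟨a, hij⟩ (hg _ _)
    · exact absurd ⟨b, hij.symm⟩ (hg _ _)
    · obtain ⟨rfl, rfl⟩ := Prod.mk.inj (g.injective (Subtype.ext hij))
      rfl

namespace Walk

def IsLongestPath {u v : V} (p : G.Walk u v) : Prop :=
  p.IsPath ∧ ∀ ⦃x y : V⦄ (q : G.Walk x y), q.IsPath → q.length ≤ p.length

theorem exists_isLongestPath [Fintype V] [Nonempty V] (G : SimpleGraph V) :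
    ∃ (u v : V) (p : G.Walk u v), p.IsLongestPath := by
  set S := {m | ∃ (u v : V) (p : G.Walk u v), p.IsPath ∧ p.length = m}
  have hS : BddAbove S :=
    ⟨Fintype.card V, by rintro _ ⟨u, v, p, hp, rfl⟩; exact hp.length_lt.le⟩
  have hne : S.Nonempty := ⟨0, Classical.arbitrary V, _, nil, by simp⟩
  obtain ⟨u, v, p, hp, hlen⟩ := Nat.sSup_mem hne hS
  exact ⟨u, v, p, hp, fun x y q hq => hlen ▸ le_csSup hS ⟨x, y, q, hq, rfl⟩⟩

theorem IsPath.card_compl_support [Fintype V] [DecidableEq V] {u v : V} {p : G.Walk u v}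
    (hp : p.IsPath) : (p.support.toFinset)ᶜ.card = Fintype.card V - (p.length + 1) := by
  rw [Finset.card_compl, List.toFinset_card_of_nodup hp.support_nodup, length_support]

namespace IsLongestPath

variable {u v w x a b : V} {p : G.Walk u v}

theorem length_le (hp : p.IsLongestPath) {x y : V} {q : G.Walk x y} (hq : q.IsPath) :
    q.length ≤ p.length :=
  hp.2 q hq

theorem reverse (hp : p.IsLongestPath) : p.reverse.IsLongestPath :=
  ⟨hp.1.reverse, by simpa using hp.2⟩

theorem not_adj_start (hp : p.IsLongestPath) (hw : w ∉ p.support) : ¬G.Adj w u := fun h => by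
  simpa using hp.length_le (hp.1.cons hw (h := h))

theorem not_adj_end (hp : p.IsLongestPath) (hw : w ∉ p.support) : ¬G.Adj v w := fun h =>
  hp.reverse.not_adj_start (by simpa using hw) h.symm

theorem card_le_length_add_three [Fintype V] (hJ : (jahangir 2).Free Gᶜ)
    (hp : p.IsLongestPath) (huv : u ≠ v) : Fintype.card V ≤ p.length + 3 := by
  classical
  by_contra! h
  obtain ⟨a, b, c, ha, hb, hc, hab, hac, hbc⟩ := Finset.two_lt_card_iff.1 <|
    show 2 < (p.support.toFinset)ᶜ.card by rw [hp.1.card_compl_support]; omega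
  simp only [Finset.mem_compl, List.mem_toFinset] at ha hb hc
  refine hJ (jahangir_two_isContained_compl (x := u) (y := v) ?_
    (fun h => hp.not_adj_start ha h.symm) (hp.not_adj_end ha)
    (fun h => hp.not_adj_start hb h.symm) (hp.not_adj_end hb)
    (fun h => hp.not_adj_start hc h.symm) (hp.not_adj_end hc))
  grind [List.nodup_cons, start_mem_support, end_mem_support]

theorem adj_or_adj_of_notMem_support (hJ : (jahangir 2).Free Gᶜ) (hp : p.IsLongestPath)
    (huv : u ≠ v) (hx : x ∈ p.support) (hxu : x ≠ u) (hxv : x ≠ v)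
    (ha : a ∉ p.support) (hb : b ∉ p.support) (hab : a ≠ b) : G.Adj a x ∨ G.Adj b x := by
  by_contra! h
  refine hJ (jahangir_two_isContained_compl (x := a) (y := b) (a := u) (b := v) ?_
    (hp.not_adj_start ha) (hp.not_adj_start hb) (fun h => hp.not_adj_end ha h.symm)
    (fun h => hp.not_adj_end hb h.symm) h.1 h.2)
  grind [List.nodup_cons, start_mem_support, end_mem_support]

theorem adj_of_not_adj_of_notMem_support (hJ : (jahangir 2).Free Gᶜ) (hp : p.IsLongestPath)
    (huv : u ≠ v) (hx : x ∈ p.support) (hxu : x ≠ u) (hxv : x ≠ v)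
    (ha : a ∉ p.support) (hb : b ∉ p.support) (hab : a ≠ b)
    (hab' : ¬G.Adj a b) (huv' : ¬G.Adj u v) (hux : ¬G.Adj u x) : G.Adj a x := by
  by_contra hax
  refine hJ (jahangir_two_isContained_compl (x := a) (y := u) (a := b) (b := v) ?_
    hab' (fun h => hp.not_adj_start hb h.symm) (fun h => hp.not_adj_end ha h.symm)
    huv' hax hux)
  grind [List.nodup_cons, start_mem_support, end_mem_support]

section FirstVertices

variable {p0 p1 p2 q : V} {h01 : G.Adj p0 p1} {h12 : G.Adj p1 p2} {r : G.Walk p2 q}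

theorem not_adj_third_of_adj_second (hp : (cons h01 (cons h12 r)).IsLongestPath)
    (hw : w ∉ (cons h01 (cons h12 r)).support) (hw1 : G.Adj w p1) : ¬G.Adj w p2 := fun hw2 => by
  simpa using hp.length_le (q := cons h01 (cons hw1.symm (cons hw2 r)))
    (by grind [hp.1, cons_isPath_iff, support_cons])

theorem not_adj_start_end_of_adj_second (hp : (cons h01 (cons h12 r)).IsLongestPath)
    (hw : w ∉ (cons h01 (cons h12 r)).support) (hw1 : G.Adj w p1) : ¬G.Adj p0 q := fun h0q => by
  simpa using hp.length_le (q := cons hw1 ((cons h12 r).concat h0q.symm))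
    (by grind [hp.1, cons_isPath_iff, concat_isPath_iff, support_cons, support_concat])

theorem not_adj_start_third_of_adj_second (hp : (cons h01 (cons h12 r)).IsLongestPath)
    (hw : w ∉ (cons h01 (cons h12 r)).support) (hw1 : G.Adj w p1) : ¬G.Adj p0 p2 := fun h02 => by
  simpa using hp.length_le (q := cons hw1 (cons h01.symm (cons h02 r)))
    (by grind [hp.1, cons_isPath_iff, support_cons])

theorem not_adj_of_adj_second_of_adj_third (hp : (cons h01 (cons h12 r)).IsLongestPath)
    (ha : a ∉ (cons h01 (cons h12 r)).support) (hb : b ∉ (cons h01 (cons h12 r)).support)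
    (ha1 : G.Adj a p1) (hb2 : G.Adj b p2) : ¬G.Adj a b := fun hab => by
  simpa using hp.length_le (q := cons h01 (cons ha1.symm (cons hab (cons hb2 r))))
    (by grind [hp.1, hab.ne, cons_isPath_iff, support_cons])

theorem eq_of_notMem_support (hJ : (jahangir 2).Free Gᶜ)
    (hp : (cons h01 (cons h12 r)).IsLongestPath) (hq : p2 ≠ q)
    (ha : a ∉ (cons h01 (cons h12 r)).support) (hb : b ∉ (cons h01 (cons h12 r)).support) :
    a = b := by
  by_contra hab
  have hnd := hp.1.support_nodup
  have := r.start_mem_support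
  have := r.end_mem_support
  simp only [support_cons, List.nodup_cons, List.mem_cons, not_or] at hnd
  have h0q : p0 ≠ q := by grind
  have h1 : G.Adj a p1 ∨ G.Adj b p1 :=
    hp.adj_or_adj_of_notMem_support hJ h0q (by simp) h01.ne.symm (by grind) ha hb hab
  have h2 : G.Adj a p2 ∨ G.Adj b p2 :=
    hp.adj_or_adj_of_notMem_support hJ h0q (by simp [*]) (by grind) hq ha hb hab
  obtain ⟨hn0q, hn02⟩ : ¬G.Adj p0 q ∧ ¬G.Adj p0 p2 := by
    rcases h1 with h | h
    · exact ⟨hp.not_adj_start_end_of_adj_second ha h, hp.not_adj_start_third_of_adj_second ha h⟩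
    · exact ⟨hp.not_adj_start_end_of_adj_second hb h, hp.not_adj_start_third_of_adj_second hb h⟩
  by_cases hadj : G.Adj a b
  · rcases h1 with ha1 | hb1 <;> rcases h2 with ha2 | hb2
    · exact hp.not_adj_third_of_adj_second ha ha1 ha2
    · exact hp.not_adj_of_adj_second_of_adj_third ha hb ha1 hb2 hadj
    · exact hp.not_adj_of_adj_second_of_adj_third hb ha hb1 ha2 hadj.symm
    · exact hp.not_adj_third_of_adj_second hb hb1 hb2
  · have ha2 := hp.adj_of_not_adj_of_notMem_support hJ h0q (x := p2) (by simp [*]) (by grind) hq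
      ha hb hab hadj hn0q hn02
    have hb2 := hp.adj_of_not_adj_of_notMem_support hJ h0q (x := p2) (by simp [*]) (by grind) hq
      hb ha (Ne.symm hab) (fun h => hadj h.symm) hn0q hn02
    rcases h1 with ha1 | hb1
    exacts [hp.not_adj_third_of_adj_second ha ha1 ha2, hp.not_adj_third_of_adj_second hb hb1 hb2]

end FirstVertices

theorem card_le_length_add_two [Fintype V] (hJ : (jahangir 2).Free Gᶜ) (hp : p.IsLongestPath)
    (h3 : 3 ≤ p.length) : Fintype.card V ≤ p.length + 2 := by
  classical
  have hcompl : (p.support.toFinset)ᶜ.card ≤ 1 := Finset.card_le_one.2 fun a ha b hb => by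
    simp only [Finset.mem_compl, List.mem_toFinset] at ha hb
    obtain _ | ⟨h01, _ | ⟨h12, r⟩⟩ := p
    · simp at h3
    · simp at h3
    refine hp.eq_of_notMem_support hJ ?_ ha hb
    rintro rfl
    have hr : r.Nil := isPath_iff_nil.1 hp.1.of_cons.of_cons
    simp [hr.length_eq_zero] at h3
  rw [hp.1.card_compl_support] at hcompl
  omega

end IsLongestPath

end Walk

theorem pathGraph_isContained_of_free_compl [Fintype V] {n : ℕ} (hJ : (jahangir 2).Free Gᶜ)
    (hn : 5 ≤ n) (hV : n + 1 ≤ Fintype.card V) : pathGraph n ⊑ G := by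
  have : Nonempty V := Fintype.card_pos_iff.1 (by omega)
  obtain ⟨x, y, hxy⟩ : ∃ x y, G.Adj x y := by
    by_contra! h
    obtain rfl : G = ⊥ := by ext x y; simp [h]
    refine hJ ?_
    rw [compl_bot]
    exact isContained_top_iff.2 (Function.Embedding.nonempty_of_card_le (by simp; omega))
  obtain ⟨u, v, p, hp⟩ := Walk.exists_isLongestPath G
  have h1 : 1 ≤ p.length := hp.length_le (q := .cons hxy .nil) (by simp [hxy.ne])
  have huv : u ≠ v := by
    rintro rfl
    simp [(Walk.isPath_iff_nil.1 hp.1).length_eq_zero] at h1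
  have h3 := hp.card_le_length_add_three hJ huv
  have h2 := hp.card_le_length_add_two hJ (by omega)
  exact (pathGraph_isContained_pathGraph (by omega)).trans hp.1.isContained_pathGraph

theorem kCopies_pathGraph_isContained_of_free_compl {V : Type*} [Fintype V]
    {G : SimpleGraph V} {n k : ℕ} (hJ : (jahangir 2).Free Gᶜ) (hn : 5 ≤ n)
    (hV : k * n + 1 ≤ Fintype.card V) : kCopies k (pathGraph n) ⊑ G := by
  classical
  induction k generalizing V with
  | zero => exact .of_isEmpty
  | succ k ih =>
    obtain ⟨f⟩ := pathGraph_isContained_of_free_compl hJ hn (by nlinarith)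
    refine kCopies_succ_isContained f (ih (fun h => hJ (h.trans ?_)) ?_)
    · exact (IsIndContained.compl ⟨Embedding.induce _⟩).isContained
    · rw [Fintype.card_compl_set, Set.card_range_of_injective (f := f) f.injective,
        Fintype.card_fin]
      rw [add_mul, one_mul] at hV
      omega

end SimpleGraph

theorem kPath_or_J4_general (n k : ℕ) (hn : 5 ≤ n) (F : SimpleGraph (Fin (k * n + 1))) :
    Contains (kCopies k (pathGraph n)) F ∨ Contains (jahangir 2) Fᶜ := by
  simp only [contains_iff_isContained]
  exact or_iff_not_imp_right.2 fun hJ =>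
    kCopies_pathGraph_isContained_of_free_compl hJ hn (by simp)

/-- For `n ≥ 5` and `k ≥ 1`, every graph on `kn + 1` vertices contains `k` pairwise
vertex-disjoint copies of `P_n`, or its complement contains `J_4`. -/
theorem kPath_or_J4 (n k : ℕ) (hn : 5 ≤ n) (hk : 1 ≤ k) (F : SimpleGraph (Fin (k * n + 1))) :
    Contains (kCopies k (pathGraph n)) F ∨ Contains (jahangir 2) Fᶜ :=
  kPath_or_J4_general n k hn F
end
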